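/- Convergence to the α-determinantal process with α = −1/(2B−1) (odd type, B blocks, the first block starting at the ground level): let n ≥ 1, B ≥ 1, and let ω_1, …, ω_{B−1} : ℕ → ℝ be sequences with ω_j(t) → ∞ for every j and |ω_j(t) − ω_k(t)| → ∞ for all j ≠ k, as t → ∞. Define k_t(u) = sinc(πu/(2B−1)) · (2/(2B−1)) ( 1/2 + ∑_{j=1}^{B−1} cos(ω_j(t) u) ). Then for every bounded measurable f : ℝⁿ → ℝ with compact support, lim_{t → ∞} ∫_{ℝⁿ} det_{1 ≤ i,j ≤ n}[ k_t(x_i − x_j) ] f(x) dx = ∫_{ℝⁿ} det_{−1/(2B−1), 1 ≤ i,j ≤ n}[ sinc(π(x_i − x_j)/(2B−1)) ] f(x) dx. -/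

import Mathlib

/-!
Write `M = 2B - 1` and let `φ` run over the `M` frequencies `0, ±ω_1, …, ±ω_{B-1}`; then
`k_t(u) = sinc(πu/M) · M⁻¹ ∑_φ e^{iφu}`. Expanding the determinant over permutations `σ` and
over the choice `ε(i)` of a frequency in each factor, the `(σ, ε)` term is the integral of
`∏ sinc(π(x_{σ i} - x_i)/M) f(x)` against the character `x ↦ exp(i ∑_i φ_{ε i}(x_{σ i} - x_i))`.
If `ε` is constant on the cycles of `σ` the character is trivial; otherwise some coordinate
carries a frequency difference tending to infinity and the term vanishes in the limit by the
Riemann–Lebesgue lemma. There are `M^{m(σ)}` choices of the first kind and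
`sgn σ = (-1)^{n - m(σ)}`, so the limit is `∑_σ (-1/M)^{n - m(σ)} ∫ ∏ sinc(⋯) f`, the
`α`-determinant with `α = -1/M`.
-/

open Filter MeasureTheory

/-- The setoid on `Fin n` whose classes are the cycles (orbits) of a permutation `σ`,
counting fixed points as singleton orbits. -/
def sameCycleSetoid {n : ℕ} (σ : Equiv.Perm (Fin n)) : Setoid (Fin n) :=
  ⟨σ.SameCycle, ⟨fun x => Equiv.Perm.SameCycle.refl σ x,
    fun h => h.symm, fun h h' => h.trans h'⟩⟩

/-- `cycleCount σ` is the number of cycles `m(σ)` of the permutation `σ`. -/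
noncomputable def cycleCount {n : ℕ} (σ : Equiv.Perm (Fin n)) : ℕ :=
  Nat.card (Quotient (sameCycleSetoid σ))

/-- The `α`-determinant of an `n × n` real matrix:
`det_α A = ∑_{σ ∈ S_n} α^(n - m(σ)) ∏_i A_{σ(i), i}`. -/
noncomputable def adet {n : ℕ} (α : ℝ) (A : Matrix (Fin n) (Fin n) ℝ) : ℝ :=
  ∑ σ : Equiv.Perm (Fin n), α ^ (n - cycleCount σ) * ∏ i, A (σ i) i

/-- `sinc t = sin t / t` for `t ≠ 0`, and `sinc 0 = 1`. -/
noncomputable def sinc (t : ℝ) : ℝ := if t = 0 then 1 else Real.sin t / t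

open Topology Complex

namespace Equiv.Perm

variable {α : Type*}

section Cycles

variable [Fintype α] [DecidableEq α] (σ : Perm α)

def cycleFactorOrFixedPoint (x : α) : σ.cycleFactorsFinset ⊕ Function.fixedPoints σ :=
  if h : σ x = x then .inr ⟨x, h⟩
  else .inl ⟨σ.cycleOf x, cycleOf_mem_cycleFactorsFinset_iff.mpr (mem_support.mpr h)⟩

theorem cycleFactorOrFixedPoint_eq_iff {x y : α} :
    σ.cycleFactorOrFixedPoint x = σ.cycleFactorOrFixedPoint y ↔ σ.SameCycle x y := by
  by_cases hx : σ x = x <;> by_cases hy : σ y = y <;>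
    simp only [cycleFactorOrFixedPoint, hx, hy, dite_true, dite_false, Sum.inl.injEq,
      Sum.inr.injEq, reduceCtorEq, false_iff, Subtype.ext_iff]
  · exact ⟨fun h => h ▸ SameCycle.refl σ x, fun h => h.eq_of_left hx⟩
  · exact fun h => hy (h.apply_eq_self_iff.mp hx)
  · exact fun h => hx (h.apply_eq_self_iff.mpr hy)
  · exact (sameCycle_iff_cycleOf_eq_of_mem_support (mem_support.mpr hx)
      (mem_support.mpr hy)).symm

theorem cycleFactorOrFixedPoint_surjective : Function.Surjective σ.cycleFactorOrFixedPoint := by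
  rintro (⟨c, hc⟩ | ⟨x, hx⟩)
  · obtain ⟨x, hx⟩ := (mem_cycleFactorsFinset_iff.mp hc).1.nonempty_support
    have hσx : σ x ≠ x := by
      rw [← (mem_cycleFactorsFinset_iff.mp hc).2 x hx]
      exact mem_support.mp hx
    refine ⟨x, ?_⟩
    simp only [cycleFactorOrFixedPoint, hσx, dite_false, cycle_is_cycleOf hx hc]
  · exact ⟨x, by simp only [cycleFactorOrFixedPoint, show σ x = x from hx, dite_true]⟩

theorem nat_card_quotient_sameCycle :
    Nat.card (Quotient (SameCycle.setoid σ)) = Multiset.card σ.partition.parts := by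
  have e : Quotient (SameCycle.setoid σ) ≃ (σ.cycleFactorsFinset ⊕ Function.fixedPoints σ) :=
    Equiv.ofBijective (Quotient.lift _ fun _ _ => (σ.cycleFactorOrFixedPoint_eq_iff).mpr)
      ⟨fun p q => Quotient.inductionOn₂ p q fun _ _ h =>
        Quotient.sound ((σ.cycleFactorOrFixedPoint_eq_iff).mp h),
       fun c => let ⟨x, hx⟩ := σ.cycleFactorOrFixedPoint_surjective c; ⟨⟦x⟧, hx⟩⟩
  rw [Nat.card_congr e, Nat.card_sum, Nat.card_eq_fintype_card, Nat.card_eq_fintype_card,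
    card_fixedPoints, sum_cycleType, parts_partition, Multiset.card_add,
    Multiset.card_replicate, Fintype.card_coe, cycleType_def, Multiset.card_map]
  rfl

theorem sign_eq_neg_one_pow_card_sub_card_parts :
    (sign σ : ℤ) = (-1) ^ (Fintype.card α - Multiset.card σ.partition.parts) := by
  have hle : Multiset.card σ.cycleType ≤ σ.cycleType.sum := by
    simpa using Multiset.card_nsmul_le_sum fun _ h => (one_lt_of_mem_cycleType h).le
  have hsupp : σ.cycleType.sum ≤ Fintype.card α := sum_cycleType_le σ
  rw [sign_of_cycleType, parts_partition, Multiset.card_add, Multiset.card_replicate,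
    ← sum_cycleType]
  push_cast
  rw [show Fintype.card α - (Multiset.card σ.cycleType + (Fintype.card α - σ.cycleType.sum))
      = σ.cycleType.sum - Multiset.card σ.cycleType by omega,
    show σ.cycleType.sum + Multiset.card σ.cycleType
      = σ.cycleType.sum - Multiset.card σ.cycleType + 2 * Multiset.card σ.cycleType by omega,
    pow_add, pow_mul]
  norm_num

end Cycles

def invariantFunEquiv {E : Type*} [Finite α] (σ : Perm α) :
    {ε : α → E // ∀ i, ε (σ i) = ε i} ≃ (Quotient (SameCycle.setoid σ) → E) where
  toFun ε := Quotient.lift ε.1 fun x y hxy => by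
    obtain ⟨k, rfl⟩ := hxy.exists_nat_pow_eq
    have h : Function.Semiconj ε.1 σ id := ε.2
    simpa [coe_pow] using (h.iterate_right k x).symm
  invFun g := ⟨fun x => g ⟦x⟧, fun i => congrArg g (Quotient.sound ⟨-1, by simp⟩)⟩
  left_inv ε := rfl
  right_inv g := funext fun q => Quotient.inductionOn q fun _ => rfl

end Equiv.Perm

theorem cycleCount_le {n : ℕ} (σ : Equiv.Perm (Fin n)) : cycleCount σ ≤ n := by
  simpa [cycleCount] using
    Nat.card_le_card_of_surjective (Quotient.mk (sameCycleSetoid σ)) Quotient.mk_surjective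

theorem cycleCount_eq_card_parts {n : ℕ} (σ : Equiv.Perm (Fin n)) :
    cycleCount σ = Multiset.card σ.partition.parts :=
  σ.nat_card_quotient_sameCycle

theorem sign_eq_neg_one_pow_sub_cycleCount {n : ℕ} (σ : Equiv.Perm (Fin n)) :
    (Equiv.Perm.sign σ : ℤ) = (-1) ^ (n - cycleCount σ) := by
  rw [σ.sign_eq_neg_one_pow_card_sub_card_parts, cycleCount_eq_card_parts]
  congr 2
  exact Fintype.card_fin n

theorem card_invariantFun {n : ℕ} (σ : Equiv.Perm (Fin n)) (E : Type*) [Fintype E] :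
    Nat.card {ε : Fin n → E // ∀ i, ε (σ i) = ε i} = Fintype.card E ^ cycleCount σ := by
  rw [Nat.card_congr σ.invariantFunEquiv, Nat.card_fun, Nat.card_eq_fintype_card, cycleCount]
  rfl

theorem sign_mul_card_invariantFun_div_pow {n : ℕ} {E : Type*} [Fintype E] [Nonempty E]
    (σ : Equiv.Perm (Fin n)) :
    ((Equiv.Perm.sign σ : ℤ) : ℝ) * Nat.card {ε : Fin n → E // ∀ i, ε (σ i) = ε i} /
        (Fintype.card E : ℝ) ^ n = (-(Fintype.card E : ℝ)⁻¹) ^ (n - cycleCount σ) := by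
  have hN : (Fintype.card E : ℝ) ≠ 0 := Nat.cast_ne_zero.mpr Fintype.card_ne_zero
  have hn : (Fintype.card E : ℝ) ^ n
      = (Fintype.card E : ℝ) ^ (n - cycleCount σ) * (Fintype.card E : ℝ) ^ cycleCount σ := by
    rw [← pow_add, Nat.sub_add_cancel (cycleCount_le σ)]
  rw [card_invariantFun, sign_eq_neg_one_pow_sub_cycleCount, hn,
    show -(Fintype.card E : ℝ)⁻¹ = -1 * (Fintype.card E : ℝ)⁻¹ by ring, mul_pow, inv_pow]
  push_cast
  field_simp

open Classical in
theorem sum_sign_mul_inv_card_pow_mul_ite {n : ℕ} {E : Type*} [Fintype E] [Nonempty E]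
    (σ : Equiv.Perm (Fin n)) (z : ℂ) :
    ∑ ε : Fin n → E, ((Equiv.Perm.sign σ : ℤ) : ℂ) * (Fintype.card E : ℂ)⁻¹ ^ n *
        (if ∀ i, ε (σ i) = ε i then z else 0)
      = ((-(Fintype.card E : ℝ)⁻¹) ^ (n - cycleCount σ) : ℝ) * z := by
  rw [← sign_mul_card_invariantFun_div_pow, Nat.card_eq_fintype_card, Fintype.card_subtype]
  simp only [mul_ite, mul_zero]
  rw [Finset.sum_ite, Finset.sum_const_zero, add_zero, Finset.sum_const, nsmul_eq_mul]
  push_cast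
  ring

theorem tendsto_integral_exp_dotProduct_mul {α ι : Type*} [Fintype ι] {l : Filter α}
    {c : α → ι → ℝ} (hc : Tendsto (fun t => ‖c t‖) l atTop) (g : (ι → ℝ) → ℂ) :
    Tendsto (fun t => ∫ x, exp (I * ↑(c t ⬝ᵥ x)) * g x) l (𝓝 0) := by
  classical
  let D : (ι → ℝ) ≃L[ℝ] StrongDual ℝ (ι → ℝ) :=
    (dotProductEquiv ℝ ι ≪≫ₗ LinearMap.toContinuousLinearMap).toContinuousLinearEquiv
  have hD : ∀ v x, D v x = v ⬝ᵥ x := fun _ _ => rfl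
  have hw : Tendsto (fun t => D (-(2 * Real.pi)⁻¹ • c t)) l (cocompact _) := by
    refine D.toHomeomorph.isClosedEmbedding.tendsto_cocompact.comp ?_
    rw [← Metric.cobounded_eq_cocompact, ← tendsto_norm_atTop_iff_cobounded]
    simp only [norm_smul, norm_neg, norm_inv, Real.norm_eq_abs, abs_of_pos Real.two_pi_pos]
    exact hc.const_mul_atTop (inv_pos.mpr Real.two_pi_pos)
  refine ((tendsto_integral_exp_smul_cocompact g volume).comp hw).congr fun t => ?_
  refine integral_congr_ae (Eventually.of_forall fun x => ?_)
  simp only [hD, smul_dotProduct, Circle.smul_def, Real.fourierChar_apply, smul_eq_mul]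
  congr 2
  push_cast
  field_simp

theorem sum_mul_sub_perm_eq_dotProduct {ι : Type*} [Fintype ι] (a x : ι → ℝ)
    (σ : Equiv.Perm ι) : ∑ i, a i * (x (σ i) - x i) = (a ∘ σ.symm - a) ⬝ᵥ x := by
  simp only [dotProduct, Pi.sub_apply, Function.comp_apply, mul_sub, sub_mul,
    Finset.sum_sub_distrib]
  rw [← Equiv.sum_comp σ fun j => a (σ.symm j) * x j]
  simp

theorem det_mul_average_exp {ι E : Type*} [Fintype ι] [DecidableEq ι] [Fintype E]
    (φ : E → ℝ) (A : Matrix ι ι ℝ) (x : ι → ℝ) :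
    (Matrix.of fun i j => (A i j : ℂ) *
        ((Fintype.card E : ℂ)⁻¹ * ∑ e, exp (I * ↑(φ e * (x i - x j))))).det
      = ∑ σ : Equiv.Perm ι, ∑ ε : ι → E,
          ((Equiv.Perm.sign σ : ℤ) : ℂ) * (Fintype.card E : ℂ)⁻¹ ^ Fintype.card ι *
            (exp (I * ↑((φ ∘ ε ∘ σ.symm - φ ∘ ε) ⬝ᵥ x)) * ∏ i, (A (σ i) i : ℂ)) := by
  rw [Matrix.det_apply]
  refine Finset.sum_congr rfl fun σ _ => ?_
  simp only [Matrix.of_apply, Finset.mul_sum, Fintype.prod_sum, Units.smul_def, zsmul_eq_mul]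
  refine Finset.sum_congr rfl fun ε _ => ?_
  have hphase : ∑ i, φ (ε i) * (x (σ i) - x i) = (φ ∘ ε ∘ σ.symm - φ ∘ ε) ⬝ᵥ x :=
    sum_mul_sub_perm_eq_dotProduct (φ ∘ ε) x σ
  rw [← hphase, Finset.prod_mul_distrib, Finset.prod_mul_distrib,
    Finset.prod_const, Finset.card_univ, ← exp_sum, ofReal_sum, Finset.mul_sum]
  ring

open Classical in
theorem tendsto_integral_exp_perm_phase_mul {α ι E : Type*} [Fintype ι] {l : Filter α}
    {φ : E → α → ℝ} (hφ : Pairwise fun e e' => Tendsto (fun t => |φ e t - φ e' t|) l atTop)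
    (σ : Equiv.Perm ι) (ε : ι → E) (h : (ι → ℝ) → ℂ) :
    Tendsto (fun t => ∫ x, exp (I * ↑(((φ · t) ∘ ε ∘ σ.symm - (φ · t) ∘ ε) ⬝ᵥ x)) * h x) l
      (𝓝 (if ∀ i, ε (σ i) = ε i then ∫ x, h x else 0)) := by
  split_ifs with hconst
  · have hzero : ∀ t, (φ · t) ∘ ε ∘ σ.symm - (φ · t) ∘ ε = 0 := fun t => funext fun j => by
      simpa [sub_eq_zero] using (congrArg (φ · t) (hconst (σ.symm j))).symm
    simp only [hzero, zero_dotProduct, ofReal_zero, mul_zero, exp_zero, one_mul]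
    exact tendsto_const_nhds
  · obtain ⟨i, hi⟩ := not_forall.mp hconst
    refine tendsto_integral_exp_dotProduct_mul
      (tendsto_atTop_mono (fun t => ?_) (hφ (Ne.symm hi))) h
    -- the `σ i` coordinate of the phase vector is `φ (ε i) t - φ (ε (σ i)) t`
    simpa using norm_le_pi_norm (((φ · t) ∘ ε ∘ σ.symm - (φ · t) ∘ ε)) (σ i)

theorem integral_adet_mul {n : ℕ} (a : ℝ) {A : (Fin n → ℝ) → Matrix (Fin n) (Fin n) ℝ}
    {g : (Fin n → ℝ) → ℂ}
    (hint : ∀ σ : Equiv.Perm (Fin n), Integrable fun x => (∏ i, (A x (σ i) i : ℂ)) * g x) :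
    ∫ x, (adet a (A x) : ℂ) * g x
      = ∑ σ : Equiv.Perm (Fin n), ((a ^ (n - cycleCount σ) : ℝ) : ℂ) *
          ∫ x, (∏ i, (A x (σ i) i : ℂ)) * g x := by
  simp only [adet, ofReal_sum, ofReal_mul, ofReal_prod, Finset.sum_mul, mul_assoc]
  rw [integral_finsetSum _ fun σ _ => (hint σ).const_mul _]
  simp only [integral_const_mul]

theorem tendsto_integral_det_mul_average_exp {α : Type*} {l : Filter α} {n : ℕ} {E : Type*}
    [Fintype E] [Nonempty E] {φ : E → α → ℝ}
    (hφ : Pairwise fun e e' => Tendsto (fun t => |φ e t - φ e' t|) l atTop)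
    {A : (Fin n → ℝ) → Matrix (Fin n) (Fin n) ℝ} (hA : ∀ i j, Measurable fun x => A x i j)
    {C : ℝ} (hAC : ∀ x i j, |A x i j| ≤ C) {g : (Fin n → ℝ) → ℂ} (hg : Integrable g) :
    Tendsto (fun t => ∫ x, (Matrix.of fun i j => (A x i j : ℂ) *
        ((Fintype.card E : ℂ)⁻¹ * ∑ e, exp (I * ↑(φ e t * (x i - x j))))).det * g x) l
      (𝓝 (∫ x, (adet (-(Fintype.card E : ℝ)⁻¹) (A x) : ℂ) * g x)) := by
  classical
  set P : Equiv.Perm (Fin n) → (Fin n → ℝ) → ℂ := fun σ x => (∏ i, (A x (σ i) i : ℂ)) * g x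
  have hP : ∀ σ, Integrable (P σ) := fun σ => by
    refine hg.bdd_mul (c := C ^ n) ?_ (Eventually.of_forall fun x => ?_)
    · exact (Finset.measurable_prod _ fun i _ =>
        measurable_ofReal.comp (hA (σ i) i)).aestronglyMeasurable
    · calc ‖∏ i, (A x (σ i) i : ℂ)‖ = ∏ i, |A x (σ i) i| := by simp [norm_prod]
        _ ≤ ∏ _i : Fin n, C := Finset.prod_le_prod (fun _ _ => abs_nonneg _) fun i _ => hAC x _ i
        _ = C ^ n := by simp
  have hPexp : ∀ σ (c : Fin n → ℝ), Integrable fun x => exp (I * ↑(c ⬝ᵥ x)) * P σ x :=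
    fun σ c => (hP σ).bdd_mul (c := 1) (by fun_prop) (Eventually.of_forall fun x => by
      rw [mul_comm, norm_exp_ofReal_mul_I])
  have hlim : Tendsto (fun t => ∑ σ : Equiv.Perm (Fin n), ∑ ε : Fin n → E,
      ((Equiv.Perm.sign σ : ℤ) : ℂ) * (Fintype.card E : ℂ)⁻¹ ^ n *
        ∫ x, exp (I * ↑(((φ · t) ∘ ε ∘ σ.symm - (φ · t) ∘ ε) ⬝ᵥ x)) * P σ x) l
      (𝓝 (∫ x, (adet (-(Fintype.card E : ℝ)⁻¹) (A x) : ℂ) * g x)) := by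
    simp only [integral_adet_mul _ hP, ← sum_sign_mul_inv_card_pow_mul_ite]
    refine tendsto_finsetSum _ fun σ _ => tendsto_finsetSum _ fun ε _ => ?_
    convert (tendsto_integral_exp_perm_phase_mul hφ σ ε (P σ)).const_mul _
  refine hlim.congr fun t => ?_
  simp only [det_mul_average_exp, Fintype.card_fin, Finset.sum_mul, mul_assoc]
  rw [integral_finsetSum _ fun σ _ => integrable_finsetSum _ fun ε _ =>
    ((hPexp σ _).const_mul _).const_mul _]
  refine Finset.sum_congr rfl fun σ _ => ?_
  rw [integral_finsetSum _ fun ε _ => ((hPexp σ _).const_mul _).const_mul _]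
  simp only [integral_const_mul, P]

def signedFreq {α : Type*} {m : ℕ} (ω : Fin m → α → ℝ) : Option (Fin m × Bool) → α → ℝ
  | none => 0
  | some (k, true) => ω k
  | some (k, false) => -ω k

theorem pairwise_tendsto_abs_sub_signedFreq {α : Type*} {l : Filter α} {m : ℕ}
    {ω : Fin m → α → ℝ} (hω : ∀ j, Tendsto (ω j) l atTop)
    (hsep : ∀ j k, j ≠ k → Tendsto (fun t => |ω j t - ω k t|) l atTop) :
    Pairwise fun e e' =>
      Tendsto (fun t => |signedFreq ω e t - signedFreq ω e' t|) l atTop := by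
  have habs : ∀ j, Tendsto (fun t => |ω j t|) l atTop :=
    fun j => tendsto_abs_atTop_atTop.comp (hω j)
  have hadd : ∀ j k, Tendsto (fun t => |ω j t + ω k t|) l atTop :=
    fun j k => tendsto_abs_atTop_atTop.comp ((hω j).atTop_add_atTop (hω k))
  rintro (_ | ⟨j, _ | _⟩) (_ | ⟨k, _ | _⟩) hne <;>
    simp only [signedFreq, Pi.zero_apply, Pi.neg_apply, zero_sub, sub_zero, zero_add, abs_neg,
      sub_neg_eq_add, neg_add_eq_sub, ← neg_add', ne_eq, Option.some.injEq, Prod.mk.injEq,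
      and_true, and_false, reduceCtorEq, not_false_eq_true, not_true_eq_false] at hne ⊢
  exacts [habs k, habs k, habs j, hsep k j (Ne.symm hne), hadd j k, habs j, hadd j k,
    hsep j k hne]

theorem sum_exp_signedFreq {α : Type*} {m : ℕ} (ω : Fin m → α → ℝ) (t : α) (u : ℝ) :
    ∑ e, exp (I * ↑(signedFreq ω e t * u)) = 1 + 2 * ∑ k, (Real.cos (ω k t * u) : ℂ) := by
  simp only [Fintype.sum_option, Fintype.sum_prod_type, Fintype.sum_bool, signedFreq,
    Pi.zero_apply, Pi.neg_apply, zero_mul, ofReal_zero, mul_zero, exp_zero, Finset.mul_sum,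
    ofReal_cos, two_cos]
  congr 1
  refine Finset.sum_congr rfl fun k _ => ?_
  push_cast
  congr 2 <;> ring

theorem card_option_fin_prod_bool (m : ℕ) :
    Fintype.card (Option (Fin m × Bool)) = 2 * m + 1 := by
  simp [mul_comm]

theorem ofReal_cos_kernel {α : Type*} {m : ℕ} (ω : Fin m → α → ℝ) (t : α) (u : ℝ) :
    (((2 / (2 * m + 1)) * (1 / 2 + ∑ k, Real.cos (ω k t * u)) : ℝ) : ℂ)
      = (Fintype.card (Option (Fin m × Bool)) : ℂ)⁻¹ *
          ∑ e, exp (I * ↑(signedFreq ω e t * u)) := by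
  rw [sum_exp_signedFreq, card_option_fin_prod_bool]
  push_cast
  ring

theorem tendsto_integral_det_mul_cos_kernel {α : Type*} {l : Filter α} {n m : ℕ}
    {ω : Fin m → α → ℝ} (hω : ∀ j, Tendsto (ω j) l atTop)
    (hsep : ∀ j k, j ≠ k → Tendsto (fun t => |ω j t - ω k t|) l atTop)
    {A : (Fin n → ℝ) → Matrix (Fin n) (Fin n) ℝ} (hA : ∀ i j, Measurable fun x => A x i j)
    {C : ℝ} (hAC : ∀ x i j, |A x i j| ≤ C) {f : (Fin n → ℝ) → ℝ} (hf : Integrable f) :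
    Tendsto (fun t => ∫ x, (Matrix.of fun i j => A x i j *
        ((2 / (2 * m + 1)) * (1 / 2 + ∑ k, Real.cos (ω k t * (x i - x j))))).det * f x) l
      (𝓝 (∫ x, adet (-(1 / (2 * m + 1))) (A x) * f x)) := by
  rw [← tendsto_ofReal_iff]
  have hcard : (Fintype.card (Option (Fin m × Bool)) : ℝ)⁻¹ = 1 / (2 * m + 1) := by
    rw [card_option_fin_prod_bool, one_div]; push_cast; rfl
  convert tendsto_integral_det_mul_average_exp (pairwise_tendsto_abs_sub_signedFreq hω hsep)
    hA hAC hf.ofReal using 2 with t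
  · rw [← integral_complex_ofReal]
    refine integral_congr_ae (Eventually.of_forall fun x => ?_)
    beta_reduce
    rw [ofReal_mul, ← ofRealHom_eq_coe, RingHom.map_det]
    congr 2
    ext i j
    rw [RingHom.mapMatrix_apply, Matrix.map_apply, Matrix.of_apply, Matrix.of_apply,
      ofRealHom_eq_coe, ofReal_mul, ofReal_cos_kernel]
  · rw [← integral_complex_ofReal, hcard]
    push_cast
    rfl

theorem HasCompactSupport.integrable_of_bound {X E : Type*} [TopologicalSpace X]
    [MeasurableSpace X] [NormedAddCommGroup E] {μ : Measure X} [IsFiniteMeasureOnCompacts μ]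
    {f : X → E} (hf : HasCompactSupport f) (hmeas : AEStronglyMeasurable f μ) {C : ℝ}
    (hC : ∀ x, ‖f x‖ ≤ C) : Integrable f μ :=
  (integrableOn_iff_integrable_of_support_subset (subset_tsupport f)).mp
    (Measure.integrableOn_of_bounded hf.measure_lt_top.ne hmeas (ae_of_all _ hC))

theorem sinc_eq_real_sinc : sinc = Real.sinc := rfl

theorem convergence_alpha_determinantal_odd_general (n B : ℕ) (hB : 1 ≤ B)
    (ω : Fin (B - 1) → ℕ → ℝ) (hω : ∀ j, Tendsto (ω j) atTop atTop)
    (hsep : ∀ j k, j ≠ k → Tendsto (fun t => |ω j t - ω k t|) atTop atTop)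
    (f : (Fin n → ℝ) → ℝ) (hmeas : Measurable f) (hbd : ∃ C : ℝ, ∀ x, |f x| ≤ C)
    (hsupp : HasCompactSupport f) :
    Tendsto (fun t : ℕ =>
        ∫ x : Fin n → ℝ,
          (Matrix.of fun i j : Fin n =>
            sinc (Real.pi * (x i - x j) / (2 * (B : ℝ) - 1)) *
              ((2 / (2 * (B : ℝ) - 1)) *
                (1 / 2 + ∑ l : Fin (B - 1), Real.cos (ω l t * (x i - x j))))).det * f x)
      atTop
      (nhds (∫ x : Fin n → ℝ,
        adet (-(1 / (2 * (B : ℝ) - 1)))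
          (Matrix.of fun i j : Fin n => sinc (Real.pi * (x i - x j) / (2 * (B : ℝ) - 1)))
          * f x)) := by
  obtain ⟨C, hC⟩ := hbd
  have hM : 2 * (B : ℝ) - 1 = 2 * ((B - 1 : ℕ) : ℝ) + 1 := by
    push_cast [Nat.cast_sub hB]
    ring
  simp only [hM, sinc_eq_real_sinc]
  refine tendsto_integral_det_mul_cos_kernel hω hsep (C := 1) (fun i j => ?_) (fun x i j => ?_)
    (hsupp.integrable_of_bound hmeas.aestronglyMeasurable hC)
  · exact Real.continuous_sinc.measurable.comp (by fun_prop)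
  · exact Real.abs_sinc_le_one _

/-- Convergence to the `α`-determinantal process with `α = −1/(2B−1)` (odd type, `B` blocks,
the first starting at the ground level): with
`k_t(u) = sinc(πu/(2B−1)) (2/(2B−1)) (1/2 + ∑_j cos(ω_j(t)u))` and frequencies going to
infinity and separating, the integrals of `det[k_t(x_i − x_j)]` against any bounded,
measurable, compactly supported `f` converge to the integrals of
`det_{−1/(2B−1)}[sinc(π(x_i − x_j)/(2B−1))]`. -/
theorem convergence_alpha_determinantal_odd (n B : ℕ) (hn : 1 ≤ n) (hB : 1 ≤ B)
    (ω : Fin (B - 1) → ℕ → ℝ) (hω : ∀ j, Tendsto (ω j) atTop atTop)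
    (hsep : ∀ j k, j ≠ k → Tendsto (fun t => |ω j t - ω k t|) atTop atTop)
    (f : (Fin n → ℝ) → ℝ) (hmeas : Measurable f) (hbd : ∃ C : ℝ, ∀ x, |f x| ≤ C)
    (hsupp : HasCompactSupport f) :
    Tendsto (fun t : ℕ =>
        ∫ x : Fin n → ℝ,
          (Matrix.of fun i j : Fin n =>
            sinc (Real.pi * (x i - x j) / (2 * (B : ℝ) - 1)) *
              ((2 / (2 * (B : ℝ) - 1)) *
                (1 / 2 + ∑ l : Fin (B - 1), Real.cos (ω l t * (x i - x j))))).det * f x)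
      atTop
      (nhds (∫ x : Fin n → ℝ,
        adet (-(1 / (2 * (B : ℝ) - 1)))
          (Matrix.of fun i j : Fin n => sinc (Real.pi * (x i - x j) / (2 * (B : ℝ) - 1)))
          * f x)) :=
  convergence_alpha_determinantal_odd_general n B hB ω hω hsep f hmeas hbd hsupp
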